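/- (Theorem A, square-zero kernel) Given a recollement (T', T, T''), the kernel ideal of the functor Φ : T → (i_ρ j_λ ↓ T'), X ↦ (j X, i_ρ X; i_ρ φ_X), is square zero: if f : X → Y and f' : Y → W satisfy j f = 0 = i_ρ f and j f' = 0 = i_ρ f', then f' ∘ f = 0. Consequently Φ is an epivalence: full, dense, and detecting isomorphisms. -/

import Mathlib

open CategoryTheory Category Limits Pretriangulated Preadditive

/-- A recollement of triangulated categories, following [BBD 1.4]. -/
structure Recollement (T₁ T₂ T₃ : Type*)
    [Category T₁] [Category T₂] [Category T₃]
    [HasZeroObject T₁] [HasZeroObject T₂] [HasZeroObject T₃]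
    [Preadditive T₁] [Preadditive T₂] [Preadditive T₃]
    [HasShift T₁ ℤ] [HasShift T₂ ℤ] [HasShift T₃ ℤ]
    [∀ n : ℤ, (shiftFunctor T₁ n).Additive]
    [∀ n : ℤ, (shiftFunctor T₂ n).Additive]
    [∀ n : ℤ, (shiftFunctor T₃ n).Additive]
    [Pretriangulated T₁] [Pretriangulated T₂] [Pretriangulated T₃] where
  i : T₁ ⥤ T₂
  iL : T₂ ⥤ T₁
  iR : T₂ ⥤ T₁
  j : T₂ ⥤ T₃
  jL : T₃ ⥤ T₂
  jR : T₃ ⥤ T₂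
  i_commShift : i.CommShift ℤ
  iL_commShift : iL.CommShift ℤ
  iR_commShift : iR.CommShift ℤ
  j_commShift : j.CommShift ℤ
  jL_commShift : jL.CommShift ℤ
  jR_commShift : jR.CommShift ℤ
  i_isTriangulated : letI := i_commShift; i.IsTriangulated
  iL_isTriangulated : letI := iL_commShift; iL.IsTriangulated
  iR_isTriangulated : letI := iR_commShift; iR.IsTriangulated
  j_isTriangulated : letI := j_commShift; j.IsTriangulated
  jL_isTriangulated : letI := jL_commShift; jL.IsTriangulated
  jR_isTriangulated : letI := jR_commShift; jR.IsTriangulated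
  adj_iL : iL ⊣ i
  adj_iR : i ⊣ iR
  adj_jL : jL ⊣ j
  adj_jR : j ⊣ jR
  i_faithful : i.Faithful
  i_full : i.Full
  jL_faithful : jL.Faithful
  jL_full : jL.Full
  jR_faithful : jR.Faithful
  jR_full : jR.Full
  /-- the unit `ε' : Id → i_ρ i` is invertible (i.e. `i` is fully faithful) -/
  isIso_iR_unit : ∀ X : T₁, IsIso (adj_iR.unit.app X)
  /-- the counit `ψ' : i_λ i → Id` is invertible -/
  isIso_iL_counit : ∀ X : T₁, IsIso (adj_iL.counit.app X)
  /-- the unit `φ' : Id → j j_λ` is invertible (i.e. `j_λ` is fully faithful) -/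
  isIso_jL_unit : ∀ Y : T₃, IsIso (adj_jL.unit.app Y)
  /-- the counit `η' : j j_ρ → Id` is invertible (i.e. `j_ρ` is fully faithful) -/
  isIso_jR_counit : ∀ Y : T₃, IsIso (adj_jR.counit.app Y)
  ji_zero : ∀ X : T₁, IsZero (j.obj (i.obj X))
  /-- the connecting morphism `δ : j_ρ j → Σ i i_ρ` -/
  δ : ∀ X : T₂, jR.obj (j.obj X) ⟶ (i.obj (iR.obj X))⟦(1 : ℤ)⟧
  δ_natural : ∀ {X Y : T₂} (f : X ⟶ Y),
    jR.map (j.map f) ≫ δ Y = δ X ≫ (i.map (iR.map f))⟦(1 : ℤ)⟧'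
  /-- the functorial exact triangle `i i_ρ X → X → j_ρ j X → Σ i i_ρ X` -/
  tri₁ : ∀ X : T₂,
    Triangle.mk (adj_iR.counit.app X) (adj_jR.unit.app X) (δ X) ∈ distTriang T₂
  /-- the connecting morphism `σ : i i_λ → Σ j_λ j` -/
  σ : ∀ X : T₂, i.obj (iL.obj X) ⟶ (jL.obj (j.obj X))⟦(1 : ℤ)⟧
  σ_natural : ∀ {X Y : T₂} (f : X ⟶ Y),
    i.map (iL.map f) ≫ σ Y = σ X ≫ (jL.map (j.map f))⟦(1 : ℤ)⟧'
  /-- the functorial exact triangle `j_λ j X → X → i i_λ X → Σ j_λ j X` -/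
  tri₂ : ∀ X : T₂,
    Triangle.mk (adj_jL.counit.app X) (adj_iL.unit.app X) (σ X) ∈ distTriang T₂

variable {T₁ T₂ T₃ : Type*}
  [Category T₁] [Category T₂] [Category T₃]
  [HasZeroObject T₁] [HasZeroObject T₂] [HasZeroObject T₃]
  [Preadditive T₁] [Preadditive T₂] [Preadditive T₃]
  [HasShift T₁ ℤ] [HasShift T₂ ℤ] [HasShift T₃ ℤ]
  [∀ n : ℤ, (shiftFunctor T₁ n).Additive]
  [∀ n : ℤ, (shiftFunctor T₂ n).Additive]
  [∀ n : ℤ, (shiftFunctor T₃ n).Additive]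
  [Pretriangulated T₁] [Pretriangulated T₂] [Pretriangulated T₃]

/-! A morphism killed by `i_ρ` vanishes on `i i_ρ Y`, so by the triangle `i i_ρ Y → Y → j_ρ j Y`
it factors through the unit `Y → j_ρ j Y`, which kills every morphism killed by `j`: this is the
square-zero property. For fullness, `a` is lifted along the triangle `j_λ j X → X → i i_λ X`: the
obstruction is a morphism out of an object in the image of `i`, where `i_ρ` detects zero morphisms,
and compatibility with `b` makes its `i_ρ`-image vanish; the remaining error in the `i_ρ`-component
is removed by a morphism factoring through `i i_λ X`, which `j` does not see. For density, glue
`i Z` to `j_ρ j j_λ A` along `δ ≫ Σ i f`, using `j i = 0` and `i_ρ j_ρ = 0` to compute the two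
components of the cone. Finally, a preimage `g` of the inverse of `Φ f` makes `f g - 1` and
`g f - 1` square-zero, so `f g` and `g f` are invertible. -/

namespace CategoryTheory

lemma isIso_of_sub_id_sq_eq_zero {C : Type*} [Category C] [Preadditive C] {X : C} (e : X ⟶ X)
    (h : (e - 𝟙 X) ≫ (e - 𝟙 X) = 0) : IsIso e := by
  let e' : End X := e
  have hnil : IsNilpotent (e' - 1) := ⟨2, by rw [pow_two, End.mul_def]; exact h⟩
  have hunit := hnil.isUnit_add_one
  rwa [sub_add_cancel, isUnit_iff_isIso] at hunit

lemma isIso_of_isIso_comp_of_isIso_comp {C : Type*} [Category C] {X Y : C} (f : X ⟶ Y)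
    (g : Y ⟶ X) [IsIso (f ≫ g)] [IsIso (g ≫ f)] : IsIso f :=
  have : Mono f := mono_of_mono f g
  have : IsSplitEpi f := IsSplitEpi.mk' ⟨inv (g ≫ f) ≫ g, by simp⟩
  isIso_of_mono_of_isSplitEpi f

end CategoryTheory

namespace Recollement

variable (R : Recollement T₁ T₂ T₃)

instance : R.i.CommShift ℤ := R.i_commShift
instance : R.i.IsTriangulated := R.i_isTriangulated
instance : R.iR.CommShift ℤ := R.iR_commShift
instance : R.iR.IsTriangulated := R.iR_isTriangulated
instance : R.j.CommShift ℤ := R.j_commShift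
instance : R.j.IsTriangulated := R.j_isTriangulated
instance : R.jR.CommShift ℤ := R.jR_commShift
instance : R.jR.IsTriangulated := R.jR_isTriangulated

lemma eq_zero_of_isZero_j_obj {Z : T₂} (hZ : IsZero (R.j.obj Z)) {B : T₃}
    (g : Z ⟶ R.jR.obj B) : g = 0 :=
  (R.adj_jR.homEquiv _ _).symm.injective (hZ.eq_of_src _ _)

lemma isZero_iR_obj_jR_obj (B : T₃) : IsZero (R.iR.obj (R.jR.obj B)) := by
  rw [IsZero.iff_id_eq_zero]
  apply (R.adj_iR.homEquiv _ _).symm.injective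
  exact (R.eq_zero_of_isZero_j_obj (R.ji_zero _) _).trans
    (R.eq_zero_of_isZero_j_obj (R.ji_zero _) _).symm

lemma iR_map_bijective (A : T₁) (Y : T₂) :
    Function.Bijective (R.iR.map : (R.i.obj A ⟶ Y) → (R.iR.obj (R.i.obj A) ⟶ R.iR.obj Y)) := by
  have := R.isIso_iR_unit A
  refine ⟨fun g g' h ↦ (R.adj_iR.homEquiv A Y).injective ?_, fun e ↦
    ⟨(R.adj_iR.homEquiv A Y).symm (R.adj_iR.unit.app A ≫ e), ?_⟩⟩
  · simp only [Adjunction.homEquiv_unit, h]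
  · rw [← cancel_epi (R.adj_iR.unit.app A)]
    have h := (R.adj_iR.homEquiv A Y).apply_symm_apply (R.adj_iR.unit.app A ≫ e)
    rwa [Adjunction.homEquiv_unit] at h

lemma eq_zero_of_iso_of_iR_map_eq_zero {Z Y : T₂} {A : T₁} (e : Z ≅ R.i.obj A) (g : Z ⟶ Y)
    (hg : R.iR.map g = 0) : g = 0 := by
  rw [← cancel_epi e.inv, comp_zero]
  apply (R.iR_map_bijective _ _).1
  rw [Functor.map_comp, hg, comp_zero, Functor.map_zero]

lemma comp_eq_zero_of_j_map_eq_zero_of_iR_map_eq_zero {X Y W : T₂} (f : X ⟶ Y) (f' : Y ⟶ W)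
    (hf : R.j.map f = 0) (hf' : R.iR.map f' = 0) : f ≫ f' = 0 := by
  obtain ⟨h, rfl⟩ : ∃ h, f' = R.adj_jR.unit.app Y ≫ h := by
    have hcounit : R.adj_iR.counit.app Y ≫ f' = 0 := by
      simpa [hf'] using (R.adj_iR.counit.naturality f').symm
    exact Triangle.yoneda_exact₂ _ (R.tri₁ Y) f' hcounit
  have hf_unit : f ≫ R.adj_jR.unit.app Y = 0 := by
    simpa [hf] using R.adj_jR.unit.naturality f
  rw [← assoc, hf_unit, zero_comp]

lemma j_map_eq_of_counit_comp_eq {X Y : T₂} {a : R.j.obj X ⟶ R.j.obj Y} {f : X ⟶ Y}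
    (h : R.adj_jL.counit.app X ≫ f = R.jL.map a ≫ R.adj_jL.counit.app Y) : R.j.map f = a := by
  apply (R.adj_jL.homEquiv _ _).symm.injective
  rw [Adjunction.homEquiv_counit, Adjunction.homEquiv_counit, ← h]
  exact R.adj_jL.counit.naturality f

lemma exists_counit_comp_eq {X Y : T₂} (a : R.j.obj X ⟶ R.j.obj Y)
    (b : R.iR.obj X ⟶ R.iR.obj Y)
    (hab : R.iR.map (R.jL.map a) ≫ R.iR.map (R.adj_jL.counit.app Y) =
      R.iR.map (R.adj_jL.counit.app X) ≫ b) :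
    ∃ f : X ⟶ Y, R.adj_jL.counit.app X ≫ f = R.jL.map a ≫ R.adj_jL.counit.app Y := by
  let T := Triangle.mk (R.adj_jL.counit.app X) (R.adj_iL.unit.app X) (R.σ X)
  have hT : T.invRotate ∈ distTriang T₂ := inv_rot_of_distTriang _ (R.tri₂ X)
  let m : (R.i.obj (R.iL.obj X))⟦(-1 : ℤ)⟧ ⟶ R.jL.obj (R.j.obj X) := T.invRotate.mor₁
  have hm : m ≫ R.adj_jL.counit.app X = 0 := comp_distTriang_mor_zero₁₂ _ hT
  suffices hobs : m ≫ R.jL.map a ≫ R.adj_jL.counit.app Y = 0 by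
    obtain ⟨f, hf⟩ := Triangle.yoneda_exact₂ _ hT _ hobs
    exact ⟨f, hf.symm⟩
  refine R.eq_zero_of_iso_of_iR_map_eq_zero ((R.i.commShiftIso (-1 : ℤ)).app (R.iL.obj X)).symm
    _ ?_
  rw [Functor.map_comp, Functor.map_comp, hab, ← Functor.map_comp_assoc, hm, Functor.map_zero,
    zero_comp]

lemma exists_j_map_eq_zero_and_iR_map_eq (X Y : T₂)
    (e : R.iR.obj (R.i.obj (R.iL.obj X)) ⟶ R.iR.obj Y) :
    ∃ c : X ⟶ Y, R.j.map c = 0 ∧ R.iR.map c = R.iR.map (R.adj_iL.unit.app X) ≫ e := by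
  obtain ⟨c, rfl⟩ := (R.iR_map_bijective _ _).2 e
  refine ⟨R.adj_iL.unit.app X ≫ c, ?_, R.iR.map_comp _ _⟩
  rw [Functor.map_comp, (R.ji_zero _).eq_zero_of_src (R.j.map c), comp_zero]

lemma exists_map_eq {X Y : T₂} (a : R.j.obj X ⟶ R.j.obj Y) (b : R.iR.obj X ⟶ R.iR.obj Y)
    (hab : R.iR.map (R.jL.map a) ≫ R.iR.map (R.adj_jL.counit.app Y) =
      R.iR.map (R.adj_jL.counit.app X) ≫ b) :
    ∃ f : X ⟶ Y, R.j.map f = a ∧ R.iR.map f = b := by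
  obtain ⟨f₀, hf₀⟩ := R.exists_counit_comp_eq a b hab
  have hdiff : R.iR.map (R.adj_jL.counit.app X) ≫ (R.iR.map f₀ - b) = 0 := by
    rw [comp_sub, ← Functor.map_comp, hf₀, Functor.map_comp, hab, sub_self]
  obtain ⟨e, he⟩ : ∃ e, R.iR.map f₀ - b = R.iR.map (R.adj_iL.unit.app X) ≫ e :=
    Triangle.yoneda_exact₂ _ (R.iR.map_distinguished _ (R.tri₂ X)) _ hdiff
  obtain ⟨c, hc, hc'⟩ := R.exists_j_map_eq_zero_and_iR_map_eq X Y e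
  refine ⟨f₀ - c, ?_, ?_⟩
  · rw [Functor.map_sub, R.j_map_eq_of_counit_comp_eq hf₀, hc, sub_zero]
  · rw [Functor.map_sub, hc', ← he, sub_sub_cancel]

lemma isIso_of_isIso_j_map_of_isIso_iR_map {X Y : T₂} (f : X ⟶ Y) [IsIso (R.j.map f)]
    [IsIso (R.iR.map f)] : IsIso f := by
  have hcomm : R.iR.map (R.jL.map (inv (R.j.map f))) ≫ R.iR.map (R.adj_jL.counit.app X) =
      R.iR.map (R.adj_jL.counit.app Y) ≫ inv (R.iR.map f) := by
    have hnat := R.adj_jL.counit.naturality f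
    dsimp at hnat
    rw [IsIso.eq_comp_inv, assoc, ← Functor.map_comp, ← Functor.map_comp, ← hnat,
      ← Functor.map_comp_assoc, IsIso.inv_hom_id, R.jL.map_id, id_comp]
  obtain ⟨g, hg, hg'⟩ := R.exists_map_eq _ _ hcomm
  have hsq : ∀ {Z : T₂} (e : Z ⟶ Z), R.j.map e = 𝟙 _ → R.iR.map e = 𝟙 _ →
      (e - 𝟙 Z) ≫ (e - 𝟙 Z) = 0 := fun e he he' ↦
    R.comp_eq_zero_of_j_map_eq_zero_of_iR_map_eq_zero _ _ (by simp [he]) (by simp [he'])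
  have := isIso_of_sub_id_sq_eq_zero _ (hsq (f ≫ g) (by simp [hg]) (by simp [hg']))
  have := isIso_of_sub_id_sq_eq_zero _ (hsq (g ≫ f) (by simp [hg]) (by simp [hg']))
  exact isIso_of_isIso_comp_of_isIso_comp f g

lemma exists_gluing (A : T₃) (Z : T₁) (f : R.iR.obj (R.jL.obj A) ⟶ Z) :
    ∃ (C : T₂) (a : A ≅ R.j.obj C) (b : Z ≅ R.iR.obj C),
      R.iR.map (R.jL.map a.hom) ≫ R.iR.map (R.adj_jL.counit.app C) = f ≫ b.hom := by
  obtain ⟨C, u, v, hC⟩ :=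
    distinguished_cocone_triangle₂ (R.δ (R.jL.obj A) ≫ (R.i.map f)⟦(1 : ℤ)⟧')
  obtain ⟨φ, hφu, hφv⟩ : ∃ φ : R.jL.obj A ⟶ C,
      R.adj_iR.counit.app (R.jL.obj A) ≫ φ = R.i.map f ≫ u ∧
        R.adj_jR.unit.app (R.jL.obj A) ≫ 𝟙 _ = φ ≫ v :=
    complete_distinguished_triangle_morphism₂ _ _ (R.tri₁ (R.jL.obj A)) hC (R.i.map f) (𝟙 _)
      (id_comp _).symm
  rw [comp_id] at hφv
  have : IsIso (R.j.map v) :=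
    (Triangle.isZero₁_iff_isIso₂ _ (R.j.map_distinguished _ hC)).1 (R.ji_zero Z)
  have : IsIso (R.adj_jR.counit.app (R.j.obj (R.jL.obj A))) := R.isIso_jR_counit _
  have : IsIso (R.j.map (R.adj_jR.unit.app (R.jL.obj A))) := by
    have htri : R.j.map (R.adj_jR.unit.app (R.jL.obj A)) ≫
        R.adj_jR.counit.app (R.j.obj (R.jL.obj A)) = 𝟙 _ :=
      R.adj_jR.left_triangle_components _
    exact IsIso.of_isIso_fac_right htri
  have : IsIso (R.j.map φ) :=
    IsIso.of_isIso_fac_right (R.j.map_comp φ v ▸ congrArg R.j.map hφv.symm)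
  have : IsIso (R.iR.map u) :=
    (Triangle.isZero₃_iff_isIso₁ _ (R.iR.map_distinguished _ hC)).1 (R.isZero_iR_obj_jR_obj _)
  have := R.isIso_jL_unit A
  have := R.isIso_iR_unit Z
  refine ⟨C, asIso (R.adj_jL.unit.app A) ≪≫ asIso (R.j.map φ),
    asIso (R.adj_iR.unit.app Z) ≪≫ asIso (R.iR.map u), ?_⟩
  have hφ : R.jL.map (R.adj_jL.unit.app A ≫ R.j.map φ) ≫ R.adj_jL.counit.app C = φ := by
    simp
  have hf : f ≫ R.adj_iR.unit.app Z ≫ R.iR.map u = R.iR.map φ := by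
    have hnat := R.adj_iR.unit.naturality f
    dsimp at hnat
    rw [reassoc_of% hnat, ← Functor.map_comp, ← hφu, Functor.map_comp,
      R.adj_iR.right_triangle_components_assoc]
  calc _ = R.iR.map (R.jL.map (R.adj_jL.unit.app A ≫ R.j.map φ) ≫ R.adj_jL.counit.app C) := by
        simp only [Iso.trans_hom, asIso_hom, Functor.map_comp]
    _ = f ≫ _ := by rw [hφ, ← hf, Iso.trans_hom, asIso_hom, asIso_hom]

end Recollement

/-- Theorem A, square-zero kernel: the kernel ideal of `Φ : T → (i_ρ j_λ ↓ T')` is square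
zero; consequently `Φ` is an epivalence (full, dense, and detecting isomorphisms). -/
theorem comparison_functor_square_zero_kernel (R : Recollement T₁ T₂ T₃) :
    (∀ (X Y W : T₂) (f : X ⟶ Y) (f' : Y ⟶ W),
      R.j.map f = 0 → R.iR.map f = 0 → R.j.map f' = 0 → R.iR.map f' = 0 → f ≫ f' = 0) ∧
    (∀ (X Y : T₂) (a : R.j.obj X ⟶ R.j.obj Y) (b : R.iR.obj X ⟶ R.iR.obj Y),
      R.iR.map (R.jL.map a) ≫ R.iR.map (R.adj_jL.counit.app Y) =
        R.iR.map (R.adj_jL.counit.app X) ≫ b →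
      ∃ f : X ⟶ Y, R.j.map f = a ∧ R.iR.map f = b) ∧
    (∀ (A : T₃) (Z : T₁) (f : R.iR.obj (R.jL.obj A) ⟶ Z),
      ∃ (C : T₂) (a : A ≅ R.j.obj C) (b : Z ≅ R.iR.obj C),
        R.iR.map (R.jL.map a.hom) ≫ R.iR.map (R.adj_jL.counit.app C) = f ≫ b.hom) ∧
    (∀ (X Y : T₂) (f : X ⟶ Y), IsIso (R.j.map f) → IsIso (R.iR.map f) → IsIso f) :=
  ⟨fun _ _ _ f f' hf _ _ hf' ↦ R.comp_eq_zero_of_j_map_eq_zero_of_iR_map_eq_zero f f' hf hf',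
    fun _ _ ↦ R.exists_map_eq, R.exists_gluing,
    fun _ _ f _ _ ↦ R.isIso_of_isIso_j_map_of_isIso_iR_map f⟩
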